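/- Let γ(t) = (e^{at}, e^{bt}) with a, b nonzero and a ≠ b. Then the quantity (γ₁'γ₂ − γ₂'γ₁)^{n+2} γ₁^{n−1} / [ (γ₁')^{n−1}(γ₂''γ₁' − γ₁''γ₂') ] is constant in t if and only if b = −a. -/

import Mathlib

/-!
Along `γ = (e^{at}, e^{bt})` every term of the ratio is a constant multiple of a product of
exponentials, and the ratio collapses to `K e^{(n+1)(a+b)t}` with
`K = (a-b)^{n+2} / (a^{n-1} a b (b-a)) ≠ 0`. Such a function is constant exactly when
`(n+1)(a+b) = 0`, i.e. when `b = -a`.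
-/

open Real

lemma deriv_exp_const_mul (c : ℝ) :
    deriv (fun s => exp (c * s)) = fun s => c * exp (c * s) := by
  simpa using iteratedDeriv_exp_const_mul 1 c

lemma deriv_deriv_exp_const_mul (c : ℝ) :
    deriv (deriv fun s => exp (c * s)) = fun s => c ^ 2 * exp (c * s) := by
  simpa [iteratedDeriv_succ] using iteratedDeriv_exp_const_mul 2 c

lemma const_mul_exp_const_mul_eq_iff {K c : ℝ} (hK : K ≠ 0) :
    (∀ s t : ℝ, K * exp (c * s) = K * exp (c * t)) ↔ c = 0 := by
  refine ⟨fun h => ?_, fun hc s t => by simp [hc]⟩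
  simpa using mul_left_cancel₀ hK (h 1 0)

lemma exp_ratio_eq (n : ℕ) {a b : ℝ} (ha : a ≠ 0) (hb : b ≠ 0) (hab : a ≠ b) (t : ℝ) :
    (a * exp (a * t) * exp (b * t) - b * exp (b * t) * exp (a * t)) ^ (n + 2)
        * exp (a * t) ^ (n - 1) /
      ((a * exp (a * t)) ^ (n - 1) *
        (b ^ 2 * exp (b * t) * (a * exp (a * t)) - a ^ 2 * exp (a * t) * (b * exp (b * t))))
    = (a - b) ^ (n + 2) / (a ^ (n - 1) * (a * b * (b - a))) *
        exp ((n + 1) * (a + b) * t) := by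
  have hexp : exp ((n + 1) * (a + b) * t) = (exp (a * t) * exp (b * t)) ^ (n + 1) := by
    rw [← exp_add, ← exp_nat_mul]; push_cast; ring_nf
  rw [hexp]
  have hu : exp (a * t) ≠ 0 := exp_ne_zero _
  have hv : exp (b * t) ≠ 0 := exp_ne_zero _
  generalize exp (a * t) = u, exp (b * t) = v at hu hv ⊢
  have hnum : a * u * v - b * v * u = (a - b) * (u * v) := by ring
  have hden : b ^ 2 * v * (a * u) - a ^ 2 * u * (b * v) = a * b * (b - a) * (u * v) := by ring
  have hba : b - a ≠ 0 := sub_ne_zero.mpr hab.symm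
  rw [hnum, hden, mul_pow, pow_succ (u * v)]
  field_simp
  ring

theorem stmt9_general (n : ℕ) (a b : ℝ) (ha : a ≠ 0) (hb : b ≠ 0) (hab : a ≠ b)
    (γ₁ γ₂ : ℝ → ℝ) (hγ₁ : γ₁ = fun t => Real.exp (a * t))
    (hγ₂ : γ₂ = fun t => Real.exp (b * t)) :
    (∀ s t : ℝ,
      (deriv γ₁ s * γ₂ s - deriv γ₂ s * γ₁ s) ^ (n + 2) * (γ₁ s) ^ (n - 1) /
        ((deriv γ₁ s) ^ (n - 1) *
          (deriv (deriv γ₂) s * deriv γ₁ s - deriv (deriv γ₁) s * deriv γ₂ s))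
      = (deriv γ₁ t * γ₂ t - deriv γ₂ t * γ₁ t) ^ (n + 2) * (γ₁ t) ^ (n - 1) /
        ((deriv γ₁ t) ^ (n - 1) *
          (deriv (deriv γ₂) t * deriv γ₁ t - deriv (deriv γ₁) t * deriv γ₂ t)))
    ↔ b = -a := by
  subst hγ₁ hγ₂
  have hK : (a - b) ^ (n + 2) / (a ^ (n - 1) * (a * b * (b - a))) ≠ 0 := by
    have := sub_ne_zero.mpr hab
    have := sub_ne_zero.mpr hab.symm
    positivity
  rw [deriv_deriv_exp_const_mul, deriv_deriv_exp_const_mul, deriv_exp_const_mul,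
    deriv_exp_const_mul]
  simp only [exp_ratio_eq n ha hb hab, const_mul_exp_const_mul_eq_iff hK, mul_eq_zero,
    Nat.cast_add_one_ne_zero, false_or]
  exact add_eq_zero_iff_eq_neg'

/-- For γ = (e^{at}, e^{bt}), the ratio
(γ₁'γ₂ − γ₂'γ₁)^{n+2} γ₁^{n−1} / [(γ₁')^{n−1}(γ₂''γ₁' − γ₁''γ₂')]
is constant in t iff b = −a. -/
theorem stmt9 (n : ℕ) (hn : 2 ≤ n) (a b : ℝ) (ha : a ≠ 0) (hb : b ≠ 0) (hab : a ≠ b)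
    (γ₁ γ₂ : ℝ → ℝ) (hγ₁ : γ₁ = fun t => Real.exp (a * t))
    (hγ₂ : γ₂ = fun t => Real.exp (b * t)) :
    (∀ s t : ℝ,
      (deriv γ₁ s * γ₂ s - deriv γ₂ s * γ₁ s) ^ (n + 2) * (γ₁ s) ^ (n - 1) /
        ((deriv γ₁ s) ^ (n - 1) *
          (deriv (deriv γ₂) s * deriv γ₁ s - deriv (deriv γ₁) s * deriv γ₂ s))
      = (deriv γ₁ t * γ₂ t - deriv γ₂ t * γ₁ t) ^ (n + 2) * (γ₁ t) ^ (n - 1) /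
        ((deriv γ₁ t) ^ (n - 1) *
          (deriv (deriv γ₂) t * deriv γ₁ t - deriv (deriv γ₁) t * deriv γ₂ t)))
    ↔ b = -a :=
  stmt9_general n a b ha hb hab γ₁ γ₂ hγ₁ hγ₂
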